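/- Under the deterministic multi-agent SIR recursion, the number of infected agents at every time k ∈ ℕ satisfies Σ_{i ∈ V} x_i(k) = Σ_{i ∈ V, k_i < ∞} (ρ(k − k_i + 1) − ρ(k − k_i − R_i)), where the differences are computed in ℤ. -/

import Mathlib

open Finset

/-- The step function `ρ : ℤ → {0,1}`, `ρ(z) = 1` iff `z > 0`. -/
def stepFn (z : ℤ) : ℕ := if 0 < z then 1 else 0

/-!
The identity holds agent by agent; the coupling terms are nonnegative, so they never matter
once an agent is infected. An infected agent stays infected while its clock `s_i` is below `R_i`,
and `s_i` counts its past infected steps, so an agent first infected at time `n` is infected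
exactly at the times `n, …, n + R_i`; afterwards `ρ(R_i − s_i) = 0` forever. That window is
precisely where `ρ(k − n + 1) − ρ(k − n − R_i) = 1`.
-/

lemma stepFn_of_pos {z : ℤ} (hz : 0 < z) : stepFn z = 1 := if_pos hz

lemma stepFn_of_nonpos {z : ℤ} (hz : z ≤ 0) : stepFn z = 0 := if_neg (not_lt.mpr hz)

lemma stepFn_le_one (z : ℤ) : stepFn z ≤ 1 := by
  unfold stepFn; split <;> omega

lemma stepFn_sub_stepFn_eq_ite (k n R : ℕ) :
    ((stepFn ((k : ℤ) - n + 1) : ℤ) - stepFn ((k : ℤ) - n - R)) =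
      if n ≤ k ∧ k ≤ n + R then 1 else 0 := by
  unfold stepFn
  split_ifs <;> omega

lemma sInf_natCast_setOf_eq_find {p : ℕ → Prop} [DecidablePred p] (h : ∃ m, p m) :
    sInf {n : ℕ∞ | ∃ m : ℕ, p m ∧ n = m} = Nat.find h := by
  apply le_antisymm
  · exact sInf_le ⟨_, Nat.find_spec h, rfl⟩
  · refine le_sInf ?_
    rintro _ ⟨m, hm, rfl⟩
    exact_mod_cast Nat.find_min' h hm

lemma sInf_natCast_setOf_eq_top {p : ℕ → Prop} (h : ¬∃ m, p m) :
    sInf {n : ℕ∞ | ∃ m : ℕ, p m ∧ n = m} = ⊤ := by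
  rw [sInf_eq_top]
  rintro _ ⟨m, hm, rfl⟩
  exact absurd ⟨m, hm⟩ h

noncomputable def firstInfectionTime (x : ℕ → ℕ) : ℕ∞ := sInf {n : ℕ∞ | ∃ m : ℕ, x m = 1 ∧ n = m}

/-- A single agent: `a k` is the (nonnegative) infection pressure from neighbours and outside. -/
structure IsSIRTrajectory (R : ℕ) (a : ℕ → ℤ) (x s : ℕ → ℕ) : Prop where
  pressure_nonneg : ∀ k, 0 ≤ a k
  x_zero_le_one : x 0 ≤ 1
  s_zero : s 0 = 0
  x_succ : ∀ k, x (k + 1) = stepFn ((R : ℤ) - s k) * stepFn ((x k : ℤ) + a k)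
  s_succ : ∀ k, s (k + 1) = s k + x k

namespace IsSIRTrajectory

variable {R : ℕ} {a : ℕ → ℤ} {x s : ℕ → ℕ}

lemma x_le_one (h : IsSIRTrajectory R a x s) : ∀ k, x k ≤ 1
  | 0 => h.x_zero_le_one
  | k + 1 => by
    rw [h.x_succ]
    exact Nat.mul_le_mul (stepFn_le_one _) (stepFn_le_one _)

lemma s_eq_sum (h : IsSIRTrajectory R a x s) (k : ℕ) : s k = ∑ m ∈ range k, x m := by
  induction k with
  | zero => simp [h.s_zero]
  | succ k ih => rw [h.s_succ, ih, sum_range_succ]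

lemma x_succ_of_eq_one (h : IsSIRTrajectory R a x s) {k : ℕ} (hk : x k = 1) :
    x (k + 1) = stepFn ((R : ℤ) - s k) := by
  have hpressure := h.pressure_nonneg k
  rw [h.x_succ, hk, stepFn_of_pos (z := ((1 : ℕ) : ℤ) + a k) (by omega), mul_one]

lemma x_succ_of_le_s (h : IsSIRTrajectory R a x s) {k : ℕ} (hk : R ≤ s k) : x (k + 1) = 0 := by
  rw [h.x_succ, stepFn_of_nonpos (by omega), zero_mul]

section FirstInfection

variable (h : IsSIRTrajectory R a x s) {n : ℕ} (hn : x n = 1) (hbefore : ∀ m < n, x m = 0)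
include h hn hbefore

lemma infected_during_window {t : ℕ} (ht : t ≤ R) : x (n + t) = 1 ∧ s (n + t) = t := by
  induction t with
  | zero =>
    refine ⟨hn, ?_⟩
    rw [add_zero, h.s_eq_sum]
    exact sum_eq_zero fun m hm => hbefore m (mem_range.mp hm)
  | succ t ih =>
    obtain ⟨hx, hs⟩ := ih (by omega)
    refine ⟨?_, by rw [← add_assoc, h.s_succ, hx, hs]⟩
    rw [← add_assoc, h.x_succ_of_eq_one hx, hs, stepFn_of_pos (by omega)]

lemma recovered_after_window (j : ℕ) : x (n + R + 1 + j) = 0 ∧ R < s (n + R + 1 + j) := by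
  induction j with
  | zero =>
    obtain ⟨hx, hs⟩ := h.infected_during_window hn hbefore le_rfl
    have hx' : x (n + R + 1) = 0 := h.x_succ_of_le_s hs.ge
    exact ⟨hx', by rw [h.s_succ, hx, hs]; omega⟩
  | succ j ih =>
    obtain ⟨hx, hs⟩ := ih
    exact ⟨h.x_succ_of_le_s hs.le, by rw [← add_assoc, h.s_succ, hx]; omega⟩

lemma x_eq_ite_of_first (k : ℕ) : x k = if n ≤ k ∧ k ≤ n + R then 1 else 0 := by
  split_ifs with hk
  · obtain ⟨t, rfl⟩ := Nat.exists_eq_add_of_le hk.1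
    exact (h.infected_during_window hn hbefore (by omega)).1
  · rcases Nat.lt_or_ge k n with hlt | hge
    · exact hbefore k hlt
    · obtain ⟨j, rfl⟩ := Nat.exists_eq_add_of_le (show n + R + 1 ≤ k by omega)
      exact (h.recovered_after_window hn hbefore j).1

end FirstInfection

lemma natCast_x_eq_ite_firstInfectionTime (h : IsSIRTrajectory R a x s) (k : ℕ) :
    (x k : ℤ) =
      if firstInfectionTime x ≠ ⊤ then
        (stepFn ((k : ℤ) - (firstInfectionTime x).toNat + 1) : ℤ) -
          stepFn ((k : ℤ) - (firstInfectionTime x).toNat - R)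
      else 0 := by
  unfold firstInfectionTime
  by_cases hinf : ∃ m, x m = 1
  · have hbefore : ∀ m < Nat.find hinf, x m = 0 := fun m hm => by
      have := Nat.find_min hinf hm
      have := h.x_le_one m
      omega
    simp only [sInf_natCast_setOf_eq_find hinf, ne_eq, ENat.natCast_ne_top, not_false_eq_true,
      if_true, ENat.toNat_natCast, stepFn_sub_stepFn_eq_ite]
    rw [h.x_eq_ite_of_first (Nat.find_spec hinf) hbefore k]
    norm_cast
  · simp only [sInf_natCast_setOf_eq_top hinf, ne_eq, not_true_eq_false, if_false]
    have := h.x_le_one k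
    have : x k ≠ 1 := fun hk => hinf ⟨k, hk⟩
    omega

end IsSIRTrajectory

theorem stmt7_general {V : Type*} [Fintype V]
    (E : V → V → Prop) [DecidableRel E]
    (R : V → ℕ)
    (c : ℕ → V → V → ℕ)
    (u : ℕ → V → ℕ)
    (x0 : V → ℕ) (hx0 : ∀ i, x0 i ≤ 1)
    (x s : ℕ → V → ℕ)
    (hx_init : ∀ i, x 0 i = x0 i)
    (hs_init : ∀ i, s 0 i = 0)
    (hx_rec : ∀ k i, x (k + 1) i =
      stepFn ((R i : ℤ) - (s k i : ℤ)) *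
        stepFn ((x k i : ℤ) +
          (∑ j ∈ Finset.univ.filter (fun j => E j i), (c k i j : ℤ) * (x k j : ℤ)) +
          (u k i : ℤ)))
    (hs_rec : ∀ k i, s (k + 1) i = s k i + x k i)
    (ki : V → ℕ∞)
    (hki : ∀ i, ki i = sInf {n : ℕ∞ | ∃ m : ℕ, x m i = 1 ∧ n = (m : ℕ∞)}) :
    ∀ k : ℕ,
      (∑ i : V, (x k i : ℤ)) =
        ∑ i ∈ Finset.univ.filter (fun i => ki i ≠ ⊤),
          ((stepFn ((k : ℤ) - ((ki i).toNat : ℤ) + 1) : ℤ) -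
            (stepFn ((k : ℤ) - ((ki i).toNat : ℤ) - (R i : ℤ)) : ℤ)) := by
  intro k
  have hagent : ∀ i, IsSIRTrajectory (R i)
      (fun k => (∑ j ∈ univ.filter (fun j => E j i), (c k i j : ℤ) * x k j) + u k i)
      (fun k => x k i) (fun k => s k i) := fun i =>
    { pressure_nonneg := fun k => by positivity
      x_zero_le_one := (hx_init i).trans_le (hx0 i)
      s_zero := hs_init i
      x_succ := fun k => by rw [hx_rec, add_assoc]
      s_succ := fun k => hs_rec k i }
  rw [sum_filter]
  refine sum_congr rfl fun i _ => ?_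
  rw [hki]
  exact (hagent i).natCast_x_eq_ite_firstInfectionTime k

/-- The number of infected agents at every time `k` satisfies
`Σ_{i ∈ V} x_i(k) = Σ_{i ∈ V, k_i < ∞} (ρ(k − k_i + 1) − ρ(k − k_i − R_i))`,
the differences computed in `ℤ`. -/
theorem stmt7 {V : Type*} [Fintype V] [DecidableEq V]
    (E : V → V → Prop) [DecidableRel E]
    (hEsymm : ∀ i j, E i j ↔ E j i) (hEirr : ∀ i, ¬ E i i)
    (R : V → ℕ) (hR : ∀ i, 1 ≤ R i)
    (c : ℕ → V → V → ℕ) (hc01 : ∀ k i j, c k i j ≤ 1)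
    (hcsymm : ∀ k i j, c k i j = c k j i)
    (u : ℕ → V → ℕ) (hu01 : ∀ k i, u k i ≤ 1)
    (x0 : V → ℕ) (hx0 : ∀ i, x0 i ≤ 1)
    (x s : ℕ → V → ℕ)
    (hx_init : ∀ i, x 0 i = x0 i)
    (hs_init : ∀ i, s 0 i = 0)
    (hx_rec : ∀ k i, x (k + 1) i =
      stepFn ((R i : ℤ) - (s k i : ℤ)) *
        stepFn ((x k i : ℤ) +
          (∑ j ∈ Finset.univ.filter (fun j => E j i), (c k i j : ℤ) * (x k j : ℤ)) +
          (u k i : ℤ)))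
    (hs_rec : ∀ k i, s (k + 1) i = s k i + x k i)
    (y : ℕ → V → ℕ)
    (hy : ∀ k i, y k i = 1 - stepFn ((R i : ℤ) - (s k i : ℤ)))
    (ki : V → ℕ∞)
    (hki : ∀ i, ki i = sInf {n : ℕ∞ | ∃ m : ℕ, x m i = 1 ∧ n = (m : ℕ∞)}) :
    ∀ k : ℕ,
      (∑ i : V, (x k i : ℤ)) =
        ∑ i ∈ Finset.univ.filter (fun i => ki i ≠ ⊤),
          ((stepFn ((k : ℤ) - ((ki i).toNat : ℤ) + 1) : ℤ) -
            (stepFn ((k : ℤ) - ((ki i).toNat : ℤ) - (R i : ℤ)) : ℤ)) :=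
  stmt7_general E R c u x0 hx0 x s hx_init hs_init hx_rec hs_rec ki hki
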